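/- arXiv:2302.14386 — 10 statements merged into one kernel-verified Lean document; each statement's English description precedes it below -/
import Mathlib

section
/- If v is a potential-sink of a PDAG G (v has no children and every sibling of v is adjacent to all other neighbors of v), then orienting all undirected edges incident to v towards v does not create any new v-structure (induced subgraph u → v ← w with u not adjacent to w) that was not present in G. -/
/-- A partially directed graph: arcs `A` and undirected edges `E`,
with at most one edge between any pair of vertices. -/
structure PDGraph (V : Type*) where
  A : V → V → Prop
  E : V → V → Prop
  E_symm : ∀ u v, E u v → E v u
  A_irrefl : ∀ v, ¬ A v v
  E_irrefl : ∀ v, ¬ E v v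
  no_two_cycle : ∀ u v, A u v → ¬ A v u
  not_both : ∀ u v, A u v → ¬ E u v

namespace PDGraph

variable {V : Type*}

/-- No directed cycle: a partially directed graph satisfying this is a PDAG. -/
def acyclic (G : PDGraph V) : Prop := ∀ v, ¬ Relation.TransGen G.A v v

/-- `u` and `v` are adjacent. -/
def adj (G : PDGraph V) (u v : V) : Prop := G.A u v ∨ G.A v u ∨ G.E u v

/-- `v` is a potential-sink: no children, and every sibling of `v` is
adjacent to all other neighbors of `v`. -/
def potentialSink (G : PDGraph V) (v : V) : Prop :=
  (∀ x, ¬ G.A v x) ∧ ∀ y, G.E y v → ∀ z, G.adj z v → z ≠ y → G.adj y z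

/-- A v-structure `u → m ← w` with `u`, `w` non-adjacent. -/
def vStructure (G : PDGraph V) (u m w : V) : Prop :=
  G.A u m ∧ G.A w m ∧ u ≠ w ∧ ¬ G.adj u w

/-- A DAG: acyclic with no undirected edges. -/
def isDAG (G : PDGraph V) : Prop := G.acyclic ∧ ∀ u v, ¬ G.E u v

/-- `D` is a consistent extension of `G`. -/
def consExt (D G : PDGraph V) : Prop :=
  D.isDAG ∧ (∀ u v, D.adj u v ↔ G.adj u v) ∧ (∀ u v, G.A u v → D.A u v) ∧
  (∀ u m w, D.vStructure u m w ↔ G.vStructure u m w)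

/-- `G` is extendable. -/
def extendable (G : PDGraph V) : Prop := ∃ D : PDGraph V, consExt D G

/-- Induced subgraph on a vertex set `S`. -/
def induce (G : PDGraph V) (S : Set V) : PDGraph S where
  A a b := G.A a b
  E a b := G.E a b
  E_symm := fun u v h => G.E_symm u v h
  A_irrefl := fun v => G.A_irrefl v
  E_irrefl := fun v => G.E_irrefl v
  no_two_cycle := fun u v h => G.no_two_cycle u v h
  not_both := fun u v h => G.not_both u v h

end PDGraph

open PDGraph

/-- Orienting all undirected edges incident to a potential-sink `v` towards `v`
creates no new v-structure. -/
theorem stmt_0 {V : Type*} (G : PDGraph V) (hG : G.acyclic) (v : V)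
    (hps : G.potentialSink v) (G' : PDGraph V)
    (hA : ∀ x y, G'.A x y ↔ G.A x y ∨ (G.E x y ∧ y = v))
    (hE : ∀ x y, G'.E x y ↔ G.E x y ∧ x ≠ v ∧ y ≠ v) :
    ∀ u m w, G'.vStructure u m w → G.vStructure u m w := by
  obtain ⟨hvchild, hsib⟩ := hps
  intro u m w ⟨hum, hwm, huw, hnadj⟩
  rw [hA] at hum hwm
  -- u ≠ v and w ≠ v
  have huv : u ≠ v := by
    intro h
    rcases hum with h' | ⟨h', h''⟩
    · exact hvchild m (h ▸ h')
    · subst h''; exact G.E_irrefl _ (h ▸ h')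
  have hwv : w ≠ v := by
    intro h
    rcases hwm with h' | ⟨h', h''⟩
    · exact hvchild m (h ▸ h')
    · subst h''; exact G.E_irrefl _ (h ▸ h')
  -- ¬ G.adj u w
  have hnG : ¬ G.adj u w := by
    intro h
    apply hnadj
    rcases h with h | h | h
    · exact Or.inl ((hA u w).2 (Or.inl h))
    · exact Or.inr (Or.inl ((hA w u).2 (Or.inl h)))
    · exact Or.inr (Or.inr ((hE u w).2 ⟨h, huv, hwv⟩))
  refine ⟨?_, ?_, huw, hnG⟩
  · rcases hum with h | ⟨h, rfl⟩
    · exact h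
    · exfalso
      apply hnG
      refine hsib u h w ?_ (Ne.symm huw)
      rcases hwm with h' | ⟨h', _⟩
      · exact Or.inl h'
      · exact Or.inr (Or.inr h')
  · rcases hwm with h | ⟨h, rfl⟩
    · exact h
    · exfalso
      apply hnG
      have := hsib w h u ?_ huw
      · rcases this with h' | h' | h'
        · exact Or.inr (Or.inl h')
        · exact Or.inl h'
        · exact Or.inr (Or.inr (G.E_symm w u h'))
      · rcases hum with h' | ⟨h', _⟩
        · exact Or.inl h'
        · exact Or.inr (Or.inr h')
end

section
/- If v is a potential-sink of a PDAG G and G is extendable (admits a consistent DAG extension), then the graph obtained from G by orienting all undirected edges incident to v towards v is also extendable, and moreover there exists a consistent extension of G in which v is a sink (has no outgoing arcs). -/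
open PDGraph

namespace PDGraph

variable {V : Type*}

/-- Reorient all arcs/edges incident to `v` towards `v`; erase undirected edges. -/
def sinkOrient (D : PDGraph V) (v : V) : PDGraph V where
  A x y := (y = v ∧ x ≠ v ∧ D.adj x v) ∨ (x ≠ v ∧ y ≠ v ∧ D.A x y)
  E _ _ := False
  E_symm := by simp
  A_irrefl := by
    rintro x (⟨h1, h2, _⟩ | ⟨_, _, h⟩)
    · exact h2 h1
    · exact D.A_irrefl x h
  E_irrefl := by simp
  no_two_cycle := by
    rintro x y (⟨h1, h2, _⟩ | ⟨hx, hy, h⟩) (⟨g1, g2, _⟩ | ⟨gx, gy, g⟩)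
    · exact h2 g1
    · exact gx h1
    · exact hx g1
    · exact D.no_two_cycle x y h g
  not_both := by simp

lemma sinkOrient_A (D : PDGraph V) (v x y : V) :
    (D.sinkOrient v).A x y ↔ (y = v ∧ x ≠ v ∧ D.adj x v) ∨ (x ≠ v ∧ y ≠ v ∧ D.A x y) :=
  Iff.rfl

lemma sinkOrient_E (D : PDGraph V) (v x y : V) : ¬ (D.sinkOrient v).E x y :=
  fun h => h

lemma adj_symm (G : PDGraph V) {u w : V} (h : G.adj u w) : G.adj w u := by
  rcases h with h | h | h
  · exact Or.inr (Or.inl h)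
  · exact Or.inl h
  · exact Or.inr (Or.inr (G.E_symm _ _ h))

end PDGraph

/-- If `v` is a potential-sink of an extendable PDAG `G`, then the graph obtained
by orienting all undirected edges incident to `v` towards `v` is extendable, and
there is a consistent extension of `G` in which `v` is a sink. -/
theorem stmt_1 {V : Type*} (G : PDGraph V) (hG : G.acyclic) (v : V)
    (hps : G.potentialSink v) (hext : G.extendable) (G' : PDGraph V)
    (hA : ∀ x y, G'.A x y ↔ G.A x y ∨ (G.E x y ∧ y = v))
    (hE : ∀ x y, G'.E x y ↔ G.E x y ∧ x ≠ v ∧ y ≠ v) :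
    G'.extendable ∧ ∃ D : PDGraph V, D.consExt G ∧ ∀ x, ¬ D.A v x := by
  classical
  obtain ⟨D, ⟨hDac, hDE⟩, hDadj, hDarc, hDvs⟩ := hext
  have hvnoA : ∀ x, ¬ G.A v x := hps.1
  set D' := D.sinkOrient v with hD'
  -- v is a sink in D'
  have sinkD' : ∀ x, ¬ D'.A v x := by
    rintro x (⟨_, h, _⟩ | ⟨h, _, _⟩) <;> exact h rfl
  -- D' arcs imply either target is v or the arc is a D arc
  have arc_cases : ∀ a b, D'.A a b → b ≠ v → D.A a b ∧ a ≠ v := by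
    rintro a b (⟨h1, _, _⟩ | ⟨ha, _, h⟩) hb
    · exact absurd h1 hb
    · exact ⟨h, ha⟩
  -- D' is acyclic
  have hD'ac : D'.acyclic := by
    have claim : ∀ a b, Relation.TransGen D'.A a b → b ≠ v →
        Relation.TransGen D.A a b ∧ a ≠ v := by
      intro a b h
      induction h with
      | single h =>
        intro hb
        obtain ⟨h1, h2⟩ := arc_cases _ _ h hb
        exact ⟨Relation.TransGen.single h1, h2⟩
      | tail h1 h2 ih =>
        intro hc
        obtain ⟨hbc, hb⟩ := arc_cases _ _ h2 hc
        obtain ⟨ht, ha⟩ := ih hb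
        exact ⟨ht.tail hbc, ha⟩
    intro x hx
    by_cases hxv : x = v
    · subst hxv
      obtain ⟨b, h, -⟩ := Relation.TransGen.head'_iff.1 hx
      exact sinkD' _ h
    · exact hDac x (claim x x hx hxv).1
  -- adjacency of D' equals adjacency of D
  have hD'adjD : ∀ x y, D'.adj x y ↔ D.adj x y := by
    intro x y
    constructor
    · rintro (h | h | h)
      · rcases h with ⟨h1, _, h2⟩ | ⟨_, _, h⟩
        · exact h1 ▸ h2
        · exact Or.inl h
      · rcases h with ⟨h1, _, h2⟩ | ⟨_, _, h⟩
        · exact h1 ▸ D.adj_symm h2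
        · exact Or.inr (Or.inl h)
      · exact absurd h (sinkOrient_E D v x y)
    · intro h
      by_cases hy : y = v
      · have hx : x ≠ v := by
          rintro rfl
          rw [hy] at h
          rcases h with h | h | h
          · exact D.A_irrefl _ h
          · exact D.A_irrefl _ h
          · exact D.E_irrefl _ h
        exact Or.inl (Or.inl ⟨hy, hx, hy ▸ h⟩)
      · by_cases hx : x = v
        · exact Or.inr (Or.inl (Or.inl ⟨hx, hy, hx ▸ D.adj_symm h⟩))
        · rcases h with h | h | h
          · exact Or.inl (Or.inr ⟨hx, hy, h⟩)
          · exact Or.inr (Or.inl (Or.inr ⟨hy, hx, h⟩))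
          · exact absurd h (hDE x y)
  have hD'adjG : ∀ x y, D'.adj x y ↔ G.adj x y := fun x y =>
    (hD'adjD x y).trans (hDadj x y)
  -- key: a neighbor of v that is non-adjacent to another neighbor is a parent
  have keyAv : ∀ u w, D.adj u v → G.adj w v → u ≠ w → ¬ G.adj u w → D.A u v := by
    intro u w hu hw hne hnadj
    rcases (hDadj u v).1 hu with h | h | h
    · exact hDarc _ _ h
    · exact absurd h (hvnoA u)
    · exact absurd (hps.2 u h w hw hne.symm) hnadj
  -- G arcs lift to D'
  have hD'arcG : ∀ u w, G.A u w → D'.A u w := by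
    intro u w h
    have hu : u ≠ v := by rintro rfl; exact hvnoA w h
    by_cases hw : w = v
    · exact Or.inl ⟨hw, hu, (hDadj u v).2 (Or.inl (hw ▸ h))⟩
    · exact Or.inr ⟨hu, hw, hDarc _ _ h⟩
  -- v-structures of D' equal v-structures of D (hence of G)
  have hD'vsD : ∀ u m w, D'.vStructure u m w ↔ D.vStructure u m w := by
    intro u m w
    constructor
    · rintro ⟨h1, h2, h3, h4⟩
      have h4' : ¬ D.adj u w := fun h => h4 ((hD'adjD u w).2 h)
      by_cases hm : v = m
      · subst hm
        have hu : D.adj u v := by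
          rcases h1 with ⟨_, _, h⟩ | ⟨_, hm, _⟩
          · exact h
          · exact absurd rfl hm
        have hw : D.adj w v := by
          rcases h2 with ⟨_, _, h⟩ | ⟨_, hm, _⟩
          · exact h
          · exact absurd rfl hm
        have hGu : ¬ G.adj u w := fun h => h4' ((hDadj u w).2 h)
        have hGw : ¬ G.adj w u := fun h => hGu (G.adj_symm h)
        exact ⟨keyAv u w hu ((hDadj w v).1 hw) h3 hGu,
               keyAv w u hw ((hDadj u v).1 hu) h3.symm hGw, h3, h4'⟩
      · have hm' : m ≠ v := fun h => hm h.symm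
        exact ⟨(arc_cases _ _ h1 hm').1, (arc_cases _ _ h2 hm').1, h3, h4'⟩
    · rintro ⟨h1, h2, h3, h4⟩
      have h4' : ¬ D'.adj u w := fun h => h4 ((hD'adjD u w).1 h)
      by_cases hm : v = m
      · subst hm
        have hu : u ≠ v := fun h => D.A_irrefl v (h ▸ h1)
        have hw : w ≠ v := fun h => D.A_irrefl v (h ▸ h2)
        exact ⟨Or.inl ⟨rfl, hu, Or.inl h1⟩, Or.inl ⟨rfl, hw, Or.inl h2⟩, h3, h4'⟩
      · have hm' : m ≠ v := fun h => hm h.symm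
        have hu : u ≠ v := by
          intro h
          rw [h] at h1 h3 h4
          exact hvnoA m ((hDvs v m w).1 ⟨h1, h2, h3, h4⟩).1
        have hw : w ≠ v := by
          intro h
          rw [h] at h2 h3 h4
          exact hvnoA m ((hDvs v m u).1
            ⟨h2, h1, h3.symm, fun hh => h4 (D.adj_symm hh)⟩).1
        exact ⟨Or.inr ⟨hu, hm', h1⟩, Or.inr ⟨hw, hm', h2⟩, h3, h4'⟩
  have hD'vsG : ∀ u m w, D'.vStructure u m w ↔ G.vStructure u m w := fun u m w =>
    (hD'vsD u m w).trans (hDvs u m w)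
  have hD'consG : D'.consExt G :=
    ⟨⟨hD'ac, fun x y => sinkOrient_E D v x y⟩, hD'adjG, hD'arcG, hD'vsG⟩
  -- adjacency of G' equals adjacency of G
  have hG'adjG : ∀ x y, G'.adj x y ↔ G.adj x y := by
    intro x y
    constructor
    · rintro (h | h | h)
      · rcases (hA x y).1 h with h | ⟨h, rfl⟩
        · exact Or.inl h
        · exact Or.inr (Or.inr h)
      · rcases (hA y x).1 h with h | ⟨h, rfl⟩
        · exact Or.inr (Or.inl h)
        · exact Or.inr (Or.inr (G.E_symm _ _ h))
      · exact Or.inr (Or.inr ((hE x y).1 h).1)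
    · rintro (h | h | h)
      · exact Or.inl ((hA x y).2 (Or.inl h))
      · exact Or.inr (Or.inl ((hA y x).2 (Or.inl h)))
      · by_cases hy : y = v
        · exact Or.inl ((hA x y).2 (Or.inr ⟨h, hy⟩))
        · by_cases hx : x = v
          · exact Or.inr (Or.inl ((hA y x).2 (Or.inr ⟨G.E_symm _ _ h, hx⟩)))
          · exact Or.inr (Or.inr ((hE x y).2 ⟨h, hx, hy⟩))
  -- v-structures of G' equal v-structures of G
  have hG'vsG : ∀ u m w, G'.vStructure u m w ↔ G.vStructure u m w := by
    intro u m w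
    constructor
    · rintro ⟨h1, h2, h3, h4⟩
      have h4' : ¬ G.adj u w := fun h => h4 ((hG'adjG u w).2 h)
      by_cases hm : v = m
      · subst hm
        have hu : G.adj u v := (hG'adjG u v).1 (Or.inl h1)
        have hw : G.adj w v := (hG'adjG w v).1 (Or.inl h2)
        have hau : G.A u v := by
          rcases (hA u v).1 h1 with h | ⟨h, _⟩
          · exact h
          · exact absurd (hps.2 u h w hw h3.symm) h4'
        have haw : G.A w v := by
          rcases (hA w v).1 h2 with h | ⟨h, _⟩
          · exact h
          · exact absurd (hps.2 w h u hu h3) fun h' => h4' (G.adj_symm h')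
        exact ⟨hau, haw, h3, h4'⟩
      · have hm' : m ≠ v := fun h => hm h.symm
        have hau : G.A u m := by
          rcases (hA u m).1 h1 with h | ⟨_, h⟩
          · exact h
          · exact absurd h hm'
        have haw : G.A w m := by
          rcases (hA w m).1 h2 with h | ⟨_, h⟩
          · exact h
          · exact absurd h hm'
        exact ⟨hau, haw, h3, h4'⟩
    · rintro ⟨h1, h2, h3, h4⟩
      exact ⟨(hA u m).2 (Or.inl h1), (hA w m).2 (Or.inl h2), h3,
        fun h => h4 ((hG'adjG u w).1 h)⟩
  -- D' is a consistent extension of G'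
  have hG'arc : ∀ u w, G'.A u w → D'.A u w := by
    intro u w h
    rcases (hA u w).1 h with h | ⟨h, hw⟩
    · exact hD'arcG u w h
    · have hu : u ≠ v := by
        intro h'
        rw [h', hw] at h
        exact G.E_irrefl v h
      exact Or.inl ⟨hw, hu, (hDadj u v).2 (Or.inr (Or.inr (hw ▸ h)))⟩
  refine ⟨⟨D', ⟨hD'ac, fun x y => sinkOrient_E D v x y⟩,
      fun x y => (hD'adjG x y).trans (hG'adjG x y).symm, hG'arc,
      fun u m w => (hD'vsG u m w).trans (hG'vsG u m w).symm⟩,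
    D', hD'consG, sinkD'⟩
end

section
/- Every extendable PDAG with at least one vertex contains a potential-sink. -/
open PDGraph


lemma transGen_iterate {V : Type*} (P : V → V → Prop) (g : V → V)
    (hg : ∀ x, P x (g x)) : ∀ n x, Relation.TransGen P x (g^[n+1] x) := by
  intro n
  induction n with
  | zero => intro x; simpa using Relation.TransGen.single (hg x)
  | succ n ih =>
      intro x
      have : g^[n+2] x = g (g^[n+1] x) := by
        rw [Function.iterate_succ_apply']
      rw [this]
      exact (ih x).tail (hg _)

lemma exists_sink {V : Type*} [Fintype V] [Nonempty V] (D : PDGraph V)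
    (hD : D.acyclic) : ∃ v, ∀ x, ¬ D.A v x := by
  by_contra h
  push_neg at h
  choose g hg using h
  obtain ⟨v0⟩ := ‹Nonempty V›
  obtain ⟨i, j, hij, heq⟩ := Finite.exists_ne_map_eq_of_infinite (fun n => g^[n] v0)
  wlog hlt : i < j generalizing i j
  · exact this j i hij.symm heq.symm (by omega)
  obtain ⟨k, rfl⟩ : ∃ k, j = i + (k + 1) := ⟨j - i - 1, by omega⟩
  have h2 : g^[i + (k+1)] v0 = g^[k+1] (g^[i] v0) := by
    rw [Nat.add_comm, Function.iterate_add_apply]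
  exact hD (g^[i] v0) (by
    have := transGen_iterate D.A g hg k (g^[i] v0)
    rw [← h2, ← heq] at this
    exact this)

/-- Every extendable PDAG with at least one vertex contains a potential-sink. -/
theorem stmt_2 {V : Type*} [Fintype V] [Nonempty V] (G : PDGraph V)
    (hG : G.acyclic) (hext : G.extendable) :
    ∃ v, G.potentialSink v := by
  obtain ⟨D, hDAG, hadj, harc, hvs⟩ := hext
  obtain ⟨v, hv⟩ := exists_sink D hDAG.1
  refine ⟨v, ?_, ?_⟩
  · intro x hx
    exact hv x (harc v x hx)
  · intro y hyv z hzv hzy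
    by_contra hnadj
    -- orientations in D: y→v and z→v
    have hyadjD : D.adj y v := (hadj y v).2 (Or.inr (Or.inr hyv))
    have hyD : D.A y v := by
      rcases hyadjD with h | h | h
      · exact h
      · exact absurd h (hv y)
      · exact absurd h (fun h => hDAG.2 y v h)
    have hzadjD : D.adj z v := (hadj z v).2 hzv
    have hzD : D.A z v := by
      rcases hzadjD with h | h | h
      · exact h
      · exact absurd h (hv z)
      · exact absurd h (fun h => hDAG.2 z v h)
    have hnadjD : ¬ D.adj y z := fun h => hnadj ((hadj y z).1 h)
    have hvsD : D.vStructure z v y := ⟨hzD, hyD, hzy,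
      fun h => hnadjD (by rcases h with h | h | h
                          · exact Or.inr (Or.inl h)
                          · exact Or.inl h
                          · exact Or.inr (Or.inr (D.E_symm _ _ h)))⟩
    have := (hvs z v y).1 hvsD
    exact G.not_both y v this.2.1 hyv
end

section
/- Extendability of PDAGs is closed under taking induced subgraphs: if G is an extendable PDAG and S is any subset of its vertices, then the induced subgraph G[S] is extendable. -/
open PDGraph

namespace PDGraph

variable {V : Type*} {G D : PDGraph V} (S : Set V)

theorem acyclic.induce (hG : G.acyclic) : (G.induce S).acyclic := fun v hv =>
  hG v (Relation.TransGen.lift Subtype.val (fun _ _ h => h) _ _ hv)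

theorem isDAG.induce (hG : G.isDAG) : (G.induce S).isDAG :=
  ⟨hG.1.induce S, fun u v => hG.2 u v⟩

theorem adj_induce_iff {u v : S} : (G.induce S).adj u v ↔ G.adj u v := Iff.rfl

theorem vStructure_induce_iff {u m w : S} :
    (G.induce S).vStructure u m w ↔ G.vStructure u m w := by
  simp only [vStructure, adj_induce_iff, ne_eq, Subtype.ext_iff]
  rfl

theorem consExt.induce (h : D.consExt G) : (D.induce S).consExt (G.induce S) := by
  obtain ⟨hDAG, hadj, harc, hvs⟩ := h
  refine ⟨hDAG.induce S, fun u v => hadj u v, fun u v => harc u v, fun u m w => ?_⟩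
  rw [vStructure_induce_iff, vStructure_induce_iff]
  exact hvs u m w

theorem extendable.induce (hG : G.extendable) : (G.induce S).extendable :=
  let ⟨D, hD⟩ := hG
  ⟨D.induce S, hD.induce S⟩

end PDGraph

theorem stmt_3_general {V : Type*} (G : PDGraph V)
    (hext : G.extendable) (S : Set V) :
    (G.induce S).extendable :=
  hext.induce S

/-- Extendability is closed under taking induced subgraphs. -/
theorem stmt_3 {V : Type*} (G : PDGraph V) (hG : G.acyclic)
    (hext : G.extendable) (S : Set V) :
    (G.induce S).extendable :=
  stmt_3_general G hext S
end

section
/- (Dor–Tarsi correctness) Let G₀ be an extendable PDAG on n vertices and for 1 ≤ i ≤ n let Gᵢ be obtained from G_{i-1} by removing a potential-sink vᵢ and its incident edges. Then the sequence (v_n, v_{n-1}, ..., v₁) is a topological ordering of some consistent extension of G₀; in particular, the DAG obtained by orienting each edge {u, vᵢ} of G₀ with u ∈ {v_{i+1},...,v_n} as u → vᵢ is a consistent extension of G₀. -/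
open PDGraph

/-- Dor–Tarsi correctness: if `π 0, π 1, …` enumerates the vertices so that each
`π i` is a potential-sink of the subgraph induced on the not-yet-removed vertices
`{π j : j ≥ i}`, then the reversed order is a topological ordering of a consistent
extension of `G`: the DAG orienting each edge of `G` from larger to smaller
position in `π` is a consistent extension of `G`. -/
theorem stmt_5 {V : Type*} [Fintype V] (G : PDGraph V) (hG : G.acyclic)
    (hext : G.extendable) (π : Fin (Fintype.card V) ≃ V)
    (hsink : ∀ i : Fin (Fintype.card V),
      (G.induce {x | ∃ j, i ≤ j ∧ x = π j}).potentialSink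
        ⟨π i, ⟨i, le_refl i, rfl⟩⟩)
    (D : PDGraph V)
    (hDA : ∀ u w, D.A u w ↔ G.adj u w ∧ π.symm w < π.symm u)
    (hDE : ∀ u w, ¬ D.E u w) :
    D.consExt G ∧ ∀ u w, D.A u w → π.symm w < π.symm u := by

  -- adjacency is symmetric
  have hadjsymm : ∀ u v : V, G.adj u v → G.adj v u := by
    rintro u v (h|h|h)
    · exact Or.inr (Or.inl h)
    · exact Or.inl h
    · exact Or.inr (Or.inr (G.E_symm _ _ h))
  have hadjirr : ∀ u : V, ¬ G.adj u u := by
    rintro u (h|h|h)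
    · exact G.A_irrefl u h
    · exact G.A_irrefl u h
    · exact G.E_irrefl u h
  -- every arc of G points from larger to smaller position
  have hGA : ∀ u v, G.A u v → π.symm v < π.symm u := by
    intro u v huv
    by_contra h
    push_neg at h
    have hv : v ∈ {x | ∃ j, π.symm u ≤ j ∧ x = π j} :=
      ⟨π.symm v, h, (π.apply_symm_apply v).symm⟩
    have hns := (hsink (π.symm u)).1 ⟨v, hv⟩
    have : G.A (π (π.symm u)) v := by rw [π.apply_symm_apply]; exact huv
    exact hns this
  -- arcs decrease along directed paths
  have htrans : ∀ a b : V, Relation.TransGen D.A a b → π.symm b < π.symm a := by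
    intro a b h
    induction h with
    | single h => exact ((hDA _ _).mp h).2
    | tail _ h' ih => exact lt_trans ((hDA _ _).mp h').2 ih
  have hadj : ∀ u v, D.adj u v ↔ G.adj u v := by
    intro u v
    constructor
    · rintro (h|h|h)
      · exact ((hDA _ _).mp h).1
      · exact hadjsymm _ _ ((hDA _ _).mp h).1
      · exact absurd h (hDE _ _)
    · intro h
      rcases lt_trichotomy (π.symm v) (π.symm u) with hlt|heq|hlt
      · exact Or.inl ((hDA _ _).mpr ⟨h, hlt⟩)
      · have huv : v = u := π.symm.injective heq
        subst huv
        exact absurd h (hadjirr v)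
      · exact Or.inr (Or.inl ((hDA _ _).mpr ⟨hadjsymm _ _ h, hlt⟩))
  have hGAD : ∀ u v, G.A u v → D.A u v := fun u v h =>
    (hDA _ _).mpr ⟨Or.inl h, hGA _ _ h⟩
  -- D arcs come from arcs or undirected edges of G oriented correctly
  have harcs : ∀ u m, D.A u m → G.A u m ∨ G.E u m := by
    intro u m h
    obtain ⟨hadj', hlt⟩ := (hDA _ _).mp h
    rcases hadj' with h'|h'|h'
    · exact Or.inl h'
    · exact absurd (hGA _ _ h') (lt_asymm hlt)
    · exact Or.inr h'
  -- key: use potential sink to rule out bad v-structures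
  have hkey : ∀ u m w : V, D.A u m → D.A w m → u ≠ w → G.E u m → G.adj u w := by
    intro u m w hum hwm hne hE
    have hu' := ((hDA _ _).mp hum).2
    have hw' := ((hDA _ _).mp hwm).2
    have hmem : ∀ x : V, π.symm m < π.symm x →
        x ∈ {y | ∃ j, π.symm m ≤ j ∧ y = π j} :=
      fun x hx => ⟨π.symm x, le_of_lt hx, (π.apply_symm_apply x).symm⟩
    have hEu : G.E u (π (π.symm m)) := by rw [π.apply_symm_apply]; exact hE
    have hW : G.adj w (π (π.symm m)) := by
      rw [π.apply_symm_apply]; exact ((hDA _ _).mp hwm).1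
    have hk := (hsink (π.symm m)).2 ⟨u, hmem u hu'⟩ hEu ⟨w, hmem w hw'⟩ hW
      (fun h => hne.symm (congrArg Subtype.val h))
    exact hk
  refine ⟨⟨⟨fun v hv => lt_irrefl _ (htrans v v hv), hDE⟩, hadj, hGAD, ?_⟩,
    fun u w h => ((hDA _ _).mp h).2⟩
  intro u m w
  constructor
  · rintro ⟨hum, hwm, hne, hnadj⟩
    have hnGadj : ¬ G.adj u w := fun h => hnadj ((hadj u w).mpr h)
    rcases harcs _ _ hum with hAu|hEu
    · rcases harcs _ _ hwm with hAw|hEw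
      · exact ⟨hAu, hAw, hne, hnGadj⟩
      · exact absurd (hadjsymm _ _ (hkey w m u hwm hum hne.symm hEw)) hnGadj
    · exact absurd (hkey u m w hum hwm hne hEu) hnGadj
  · rintro ⟨hum, hwm, hne, hnadj⟩
    exact ⟨hGAD _ _ hum, hGAD _ _ hwm, hne, fun h => hnadj ((hadj u w).mp h)⟩
end

section
/- (Soundness of Meek rule R1) Let G be an extendable PDAG containing the arc a → b and the undirected edge b − c with a and c non-adjacent. Then in every consistent extension D of G, the edge between b and c is oriented as b → c. -/
open PDGraph

/-- Soundness of Meek rule R1. -/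
theorem stmt_11 {V : Type*} (G : PDGraph V) (hG : G.acyclic)
    (hext : G.extendable) (a b c : V)
    (h1 : G.A a b) (h2 : G.E b c) (h3 : ¬ G.adj a c) :
    ∀ D : PDGraph V, D.consExt G → D.A b c := by
  intro D hD
  obtain ⟨⟨hDac, hDnoE⟩, hadj, harcs, hvs⟩ := hD
  have hanec : a ≠ c := by
    rintro rfl
    exact G.not_both a b h1 (G.E_symm b a h2)
  have hDadjbc : D.adj b c := (hadj b c).mpr (Or.inr (Or.inr h2))
  rcases hDadjbc with h | h | h
  · exact h
  · exfalso
    have hvD : D.vStructure a b c :=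
      ⟨harcs a b h1, h, hanec, fun hc => h3 ((hadj a c).mp hc)⟩
    have hvG : G.vStructure a b c := (hvs a b c).mp hvD
    exact G.not_both c b hvG.2.1 (G.E_symm b c h2)
  · exact absurd h (hDnoE b c)
end

section
/- (Soundness of Meek rule R2) Let G be an extendable PDAG containing arcs a → b and b → c and the undirected edge a − c. Then in every consistent extension D of G, the edge between a and c is oriented as a → c. -/
open PDGraph

/-- Soundness of Meek rule R2. -/
theorem stmt_12 {V : Type*} (G : PDGraph V) (hG : G.acyclic)
    (hext : G.extendable) (a b c : V)
    (h1 : G.A a b) (h2 : G.A b c) (h3 : G.E a c) :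
    ∀ D : PDGraph V, D.consExt G → D.A a c := by
  intro D hD
  obtain ⟨⟨hacyc, hnoE⟩, hadj, hA, _⟩ := hD
  have hab : D.A a b := hA _ _ h1
  have hbc : D.A b c := hA _ _ h2
  have hadjac : D.adj a c := (hadj a c).mpr (Or.inr (Or.inr h3))
  rcases hadjac with h | h | h
  · exact h
  · exact absurd (Relation.TransGen.head hab (Relation.TransGen.head hbc (Relation.TransGen.single h))) (hacyc a)
  · exact absurd h (hnoE a c)
end

section
/- (Soundness of Meek rule R3) Let G be an extendable PDAG containing undirected edges a − b, a − d, a − c, arcs b → c and d → c, with b and d non-adjacent. Then in every consistent extension D of G, the edge between a and c is oriented as a → c. -/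
open PDGraph

/-- Soundness of Meek rule R3. -/
theorem stmt_13 {V : Type*} (G : PDGraph V) (hG : G.acyclic)
    (hext : G.extendable) (a b c d : V)
    (h1 : G.E a b) (h2 : G.E a d) (h3 : G.E a c)
    (h4 : G.A b c) (h5 : G.A d c) (h6 : b ≠ d) (h7 : ¬ G.adj b d) :
    ∀ D : PDGraph V, D.consExt G → D.A a c := by
  rintro D ⟨⟨hDac, hDE⟩, hadj, harc, hvs⟩
  have hbc : D.A b c := harc _ _ h4
  have hdc : D.A d c := harc _ _ h5
  -- a and c adjacent in D
  have hadjac : D.adj a c := (hadj a c).2 (Or.inr (Or.inr h3))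
  rcases hadjac with h | h | h
  · exact h
  · -- c → a, derive contradiction
    exfalso
    -- orientation of a-b in D must be b → a
    have hba : D.A b a := by
      have : D.adj a b := (hadj a b).2 (Or.inr (Or.inr h1))
      rcases this with hab | hba | hE
      · exact absurd (Relation.TransGen.head hab
          (Relation.TransGen.head hbc (Relation.TransGen.single h))) (hDac a)
      · exact hba
      · exact absurd hE (hDE a b)
    have hda : D.A d a := by
      have : D.adj a d := (hadj a d).2 (Or.inr (Or.inr h2))
      rcases this with had | hda | hE
      · exact absurd (Relation.TransGen.head had
          (Relation.TransGen.head hdc (Relation.TransGen.single h))) (hDac a)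
      · exact hda
      · exact absurd hE (hDE a d)
    -- v-structure b → a ← d in D but not in G
    have hvD : D.vStructure b a d :=
      ⟨hba, hda, h6, fun hbd => h7 ((hadj b d).1 hbd)⟩
    have hvG := (hvs b a d).1 hvD
    exact G.not_both b a hvG.1 (G.E_symm a b h1)
  · exact absurd h (hDE a c)
end

section
/- (Soundness of Meek rule R4) Let G be an extendable PDAG containing undirected edges a − b, a − c, a − d, arcs d → c and c → b, with b and d non-adjacent. Then in every consistent extension D of G, the edge between a and b is oriented as a → b. -/
open PDGraph

/-- Soundness of Meek rule R4. -/
theorem stmt_14 {V : Type*} (G : PDGraph V) (hG : G.acyclic)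
    (hext : G.extendable) (a b c d : V)
    (h1 : G.E a b) (h2 : G.E a c) (h3 : G.E a d)
    (h4 : G.A d c) (h5 : G.A c b) (h6 : b ≠ d) (h7 : ¬ G.adj b d) :
    ∀ D : PDGraph V, D.consExt G → D.A a b := by
  intro D hD
  obtain ⟨⟨hac, hnoE⟩, hadj, harc, hvs⟩ := hD
  have hdc : D.A d c := harc _ _ h4
  have hcb : D.A c b := harc _ _ h5
  -- a-b is an arc in D
  have hab : D.A a b ∨ D.A b a := by
    have := (hadj a b).mpr (Or.inr (Or.inr h1))
    rcases this with h | h | h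
    · exact Or.inl h
    · exact Or.inr h
    · exact absurd h (hnoE a b)
  rcases hab with h | hba
  · exact h
  exfalso
  -- a-d is an arc in D
  have had : D.A a d ∨ D.A d a := by
    have := (hadj a d).mpr (Or.inr (Or.inr h3))
    rcases this with h | h | h
    · exact Or.inl h
    · exact Or.inr h
    · exact absurd h (hnoE a d)
  rcases had with had | hda
  · -- cycle b → a → d → c → b
    exact hac b (Relation.TransGen.tail
      (Relation.TransGen.tail
        (Relation.TransGen.tail (Relation.TransGen.single hba) had) hdc) hcb)
  · -- v-structure b → a ← d in D
    have hnadj : ¬ D.adj b d := fun h => h7 ((hadj b d).mp h)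
    have hv : D.vStructure b a d := ⟨hba, hda, h6, hnadj⟩
    have hv' : G.vStructure b a d := (hvs b a d).mp hv
    exact G.not_both b a hv'.1 (G.E_symm a b h1)
end

section
/- If G is an extendable PDAG and G' is obtained from G by applying one of Meek's rules R1–R4 (orienting one undirected edge), then G' is a PDAG (in particular acyclic), G' is extendable, and the set of consistent extensions of G' equals the set of consistent extensions of G. -/
open PDGraph

/-- `G'` is obtained from `G` by orienting the undirected edge `p − q` as
`p → q` (all other edges unchanged). -/
def orients {V : Type*} (G G' : PDGraph V) (p q : V) : Prop :=
  G.E p q ∧ (∀ x y, G'.A x y ↔ G.A x y ∨ (x = p ∧ y = q)) ∧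
  (∀ x y, G'.E x y ↔ G.E x y ∧ ¬(x = p ∧ y = q) ∧ ¬(x = q ∧ y = p))

/-- `G'` is obtained from `G` by a single application of one of Meek's rules
R1–R4. -/
def meekStep {V : Type*} (G G' : PDGraph V) : Prop :=
  (∃ a b c, G.A a b ∧ G.E b c ∧ ¬ G.adj a c ∧ orients G G' b c) ∨
  (∃ a b c, G.A a b ∧ G.A b c ∧ G.E a c ∧ orients G G' a c) ∨
  (∃ a b c d, G.E a b ∧ G.E a d ∧ G.E a c ∧ G.A b c ∧ G.A d c ∧
    b ≠ d ∧ ¬ G.adj b d ∧ orients G G' a c) ∨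
  (∃ a b c d, G.E a b ∧ G.E a c ∧ G.E a d ∧ G.A d c ∧ G.A c b ∧
    b ≠ d ∧ ¬ G.adj b d ∧ orients G G' a b)

/-- No Meek rule is applicable in `M`. -/
def meekClosed {V : Type*} (M : PDGraph V) : Prop :=
  (¬ ∃ a b c, M.A a b ∧ M.E b c ∧ ¬ M.adj a c) ∧
  (¬ ∃ a b c, M.A a b ∧ M.A b c ∧ M.E a c) ∧
  (¬ ∃ a b c d, M.E a b ∧ M.E a d ∧ M.E a c ∧ M.A b c ∧ M.A d c ∧
    b ≠ d ∧ ¬ M.adj b d) ∧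
  (¬ ∃ a b c d, M.E a b ∧ M.E a c ∧ M.E a d ∧ M.A d c ∧ M.A c b ∧
    b ≠ d ∧ ¬ M.adj b d)


/-!
Each Meek rule only orients an edge `p − q` in the direction `p → q` that every consistent
extension `D` of `G` already has: the opposite orientation would create either a directed
cycle in `D` or a v-structure of `D` that `G` lacks (one of its arms being an undirected
edge of `G`). Adding an arc that all extensions share changes neither the adjacencies nor
the arcs these extensions must contain; it creates no new v-structure either, since such a
v-structure would already appear in an extension of `G`. Hence `G` and `G'` have the same
consistent extensions, and `G'`, having one, is acyclic.
-/

namespace PDGraph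

variable {V : Type*} {G D : PDGraph V} {u v w m : V}

lemma adj_comm : G.adj u v ↔ G.adj v u := by
  have adj_symm {x y : V} : G.adj x y → G.adj y x := by
    rintro (h | h | h)
    exacts [Or.inr (Or.inl h), Or.inl h, Or.inr (Or.inr (G.E_symm x y h))]
  exact ⟨adj_symm, adj_symm⟩

lemma acyclic_of_consExt (hD : D.consExt G) : G.acyclic := fun v hv =>
  hD.1.1 v (Relation.TransGen.mono hD.2.2.1 v v hv)

namespace isDAG

lemma A_or_A_of_adj (hD : D.isDAG) (h : D.adj u v) : D.A u v ∨ D.A v u :=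
  h.imp_right fun h' => h'.resolve_right (hD.2 u v)

lemma A_of_adj_of_transGen (hD : D.isDAG) (h : D.adj u v)
    (hp : Relation.TransGen D.A u v) : D.A u v :=
  (hD.A_or_A_of_adj h).resolve_right fun hvu => hD.1 u (hp.tail hvu)

end isDAG

namespace consExt

lemma A_or_A_of_E (hD : D.consExt G) (h : G.E u v) : D.A u v ∨ D.A v u :=
  hD.1.A_or_A_of_adj ((hD.2.1 u v).2 (Or.inr (Or.inr h)))

lemma not_vStructure_of_E (hD : D.consExt G) (h : G.E u m) : ¬ D.vStructure u m w :=
  fun hv => G.not_both u m ((hD.2.2.2 u m w).1 hv).1 h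

lemma vStructure_of_not_adj (hD : D.consExt G) (hum : D.A u m) (hwm : D.A w m)
    (hne : u ≠ w) (hnadj : ¬ G.adj u w) : D.vStructure u m w :=
  ⟨hum, hwm, hne, mt (hD.2.1 u w).1 hnadj⟩

lemma A_of_meekR1 {a b c : V} (hD : D.consExt G) (hab : G.A a b) (hbc : G.E b c)
    (hnadj : ¬ G.adj a c) : D.A b c := by
  refine (hD.A_or_A_of_E hbc).resolve_right fun hcb => ?_
  have hac : a ≠ c := by
    rintro rfl
    exact G.not_both a b hab (G.E_symm b a hbc)
  exact hD.not_vStructure_of_E (G.E_symm b c hbc)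
    (hD.vStructure_of_not_adj hcb (hD.2.2.1 a b hab) hac.symm (mt adj_comm.1 hnadj))

lemma A_of_meekR2 {a b c : V} (hD : D.consExt G) (hab : G.A a b) (hbc : G.A b c)
    (hac : G.E a c) : D.A a c :=
  hD.1.A_of_adj_of_transGen ((hD.2.1 a c).2 (Or.inr (Or.inr hac)))
    (.tail (.single (hD.2.2.1 a b hab)) (hD.2.2.1 b c hbc))

lemma A_of_meekR3 {a b c d : V} (hD : D.consExt G) (hab : G.E a b) (had : G.E a d)
    (hac : G.E a c) (hbc : G.A b c) (hdc : G.A d c) (hbd : b ≠ d) (hnadj : ¬ G.adj b d) :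
    D.A a c := by
  refine (hD.A_or_A_of_E hac).resolve_right fun hca => ?_
  have A_of_E_of_A {x : V} (hax : G.E a x) (hxc : G.A x c) : D.A x a :=
    hD.1.A_of_adj_of_transGen ((hD.2.1 x a).2 (Or.inr (Or.inr (G.E_symm a x hax))))
      (.tail (.single (hD.2.2.1 x c hxc)) hca)
  exact hD.not_vStructure_of_E (G.E_symm a b hab)
    (hD.vStructure_of_not_adj (A_of_E_of_A hab hbc) (A_of_E_of_A had hdc) hbd hnadj)

lemma A_of_meekR4 {a b c d : V} (hD : D.consExt G) (hab : G.E a b) (had : G.E a d)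
    (hdc : G.A d c) (hcb : G.A c b) (hbd : b ≠ d) (hnadj : ¬ G.adj b d) : D.A a b := by
  refine (hD.A_or_A_of_E hab).resolve_right fun hba => ?_
  have hda : D.A d a :=
    hD.1.A_of_adj_of_transGen ((hD.2.1 d a).2 (Or.inr (Or.inr (G.E_symm a d had))))
      (.tail (.tail (.single (hD.2.2.1 d c hdc)) (hD.2.2.1 c b hcb)) hba)
  exact hD.not_vStructure_of_E (G.E_symm a b hab)
    (hD.vStructure_of_not_adj hba hda hbd hnadj)

end consExt

end PDGraph

open PDGraph

namespace orients

variable {V : Type*} {G G' D : PDGraph V} {p q u v m w : V}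

lemma adj_iff (hor : orients G G' p q) : G'.adj u v ↔ G.adj u v := by
  obtain ⟨hpq, hA, hE⟩ := hor
  simp only [adj, hA, hE]
  constructor
  · rintro ((h | ⟨rfl, rfl⟩) | (h | ⟨rfl, rfl⟩) | ⟨h, -⟩)
    exacts [Or.inl h, Or.inr (Or.inr hpq), Or.inr (Or.inl h),
      Or.inr (Or.inr (G.E_symm _ _ hpq)), Or.inr (Or.inr h)]
  · rintro (h | h | h)
    · exact Or.inl (Or.inl h)
    · exact Or.inr (Or.inl (Or.inl h))
    · by_cases h₁ : u = p ∧ v = q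
      · exact Or.inl (Or.inr h₁)
      by_cases h₂ : u = q ∧ v = p
      · exact Or.inr (Or.inl (Or.inr h₂.symm))
      exact Or.inr (Or.inr ⟨h, h₁, h₂⟩)

/-- A new v-structure `u → q ← p` of `G'` would also be one of `D`, hence of `G`,
where `p − q` is undirected. -/
lemma vStructure_iff (hor : orients G G' p q) (hD : D.consExt G) (hpq : D.A p q) :
    G'.vStructure u m w ↔ G.vStructure u m w := by
  have hnA : ¬ G.A p q := fun h => G.not_both p q h hor.1
  have hnadj_iff : ¬ G'.adj u w ↔ ¬ G.adj u w := not_congr hor.adj_iff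
  constructor
  · rintro ⟨hum, hwm, hne, hnadj⟩
    rw [hnadj_iff] at hnadj
    rcases (hor.2.1 u m).1 hum with hum | ⟨rfl, rfl⟩
    · rcases (hor.2.1 w m).1 hwm with hwm | ⟨rfl, rfl⟩
      · exact ⟨hum, hwm, hne, hnadj⟩
      · exact absurd ((hD.2.2.2 u m w).1
          (hD.vStructure_of_not_adj (hD.2.2.1 u m hum) hpq hne hnadj)).2.1 hnA
    · rcases (hor.2.1 w m).1 hwm with hwm | ⟨rfl, -⟩
      · exact absurd ((hD.2.2.2 u m w).1
          (hD.vStructure_of_not_adj hpq (hD.2.2.1 w m hwm) hne hnadj)).1 hnA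
      · exact absurd rfl hne
  · rintro ⟨hum, hwm, hne, hnadj⟩
    exact ⟨(hor.2.1 u m).2 (Or.inl hum), (hor.2.1 w m).2 (Or.inl hwm), hne,
      hnadj_iff.2 hnadj⟩

lemma consExt_of_consExt (hor : orients G G' p q) (hD : D.consExt G) (hpq : D.A p q) :
    D.consExt G' := by
  obtain ⟨hdag, hadj, hA, hvs⟩ := hD
  refine ⟨hdag, fun u v => (hadj u v).trans hor.adj_iff.symm, fun u v h => ?_,
    fun u m w => (hvs u m w).trans (hor.vStructure_iff ⟨hdag, hadj, hA, hvs⟩ hpq).symm⟩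
  rcases (hor.2.1 u v).1 h with h | ⟨rfl, rfl⟩
  exacts [hA u v h, hpq]

lemma consExt_of_consExt_oriented {D₀ : PDGraph V} (hor : orients G G' p q)
    (hD₀ : D₀.consExt G) (hpq : D₀.A p q) (hD : D.consExt G') : D.consExt G := by
  obtain ⟨hdag, hadj, hA, hvs⟩ := hD
  exact ⟨hdag, fun u v => (hadj u v).trans hor.adj_iff,
    fun u v h => hA u v ((hor.2.1 u v).2 (Or.inl h)),
    fun u m w => (hvs u m w).trans (hor.vStructure_iff hD₀ hpq)⟩

lemma consExt_iff (hor : orients G G' p q) (hforced : ∀ D : PDGraph V, D.consExt G → D.A p q)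
    (hext : G.extendable) (D : PDGraph V) : D.consExt G' ↔ D.consExt G := by
  obtain ⟨D₀, hD₀⟩ := hext
  exact ⟨hor.consExt_of_consExt_oriented hD₀ (hforced D₀ hD₀),
    fun hD => hor.consExt_of_consExt hD (hforced D hD)⟩

end orients

lemma meekStep.exists_orients_forced {V : Type*} {G G' : PDGraph V} (hstep : meekStep G G') :
    ∃ p q, orients G G' p q ∧ ∀ D : PDGraph V, D.consExt G → D.A p q := by
  rcases hstep with ⟨a, b, c, hab, hbc, hnadj, hor⟩ | ⟨a, b, c, hab, hbc, hac, hor⟩ |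
    ⟨a, b, c, d, hab, had, hac, hbc, hdc, hbd, hnadj, hor⟩ |
    ⟨a, b, c, d, hab, -, had, hdc, hcb, hbd, hnadj, hor⟩
  · exact ⟨b, c, hor, fun D hD => hD.A_of_meekR1 hab hbc hnadj⟩
  · exact ⟨a, c, hor, fun D hD => hD.A_of_meekR2 hab hbc hac⟩
  · exact ⟨a, c, hor, fun D hD => hD.A_of_meekR3 hab had hac hbc hdc hbd hnadj⟩
  · exact ⟨a, b, hor, fun D hD => hD.A_of_meekR4 hab had hdc hcb hbd hnadj⟩

theorem stmt_15_general {V : Type*} (G : PDGraph V)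
    (hext : G.extendable) (G' : PDGraph V) (hstep : meekStep G G') :
    G'.acyclic ∧ G'.extendable ∧ ∀ D : PDGraph V, D.consExt G' ↔ D.consExt G := by
  obtain ⟨p, q, hor, hforced⟩ := hstep.exists_orients_forced
  have hiff := hor.consExt_iff hforced hext
  obtain ⟨D₀, hD₀⟩ := hext
  have hD₀' := (hiff D₀).2 hD₀
  exact ⟨acyclic_of_consExt hD₀', ⟨D₀, hD₀'⟩, hiff⟩

/-- Applying one Meek rule to an extendable PDAG yields an acyclic (hence PDAG),
extendable graph with the same set of consistent extensions. -/
theorem stmt_15 {V : Type*} (G : PDGraph V) (hG : G.acyclic)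
    (hext : G.extendable) (G' : PDGraph V) (hstep : meekStep G G') :
    G'.acyclic ∧ G'.extendable ∧ ∀ D : PDGraph V, D.consExt G' ↔ D.consExt G :=
  stmt_15_general G hext G' hstep
end
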